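/- If the rounding error terms satisfy |e_i| ≤ ε for i = 1,2,3 and x ∈ [0,1], then |(2x² − x)e₁ + x²e₂ + (x² − x)e₃| ≤ 2ε, and this bound is attained (at x = 1, e₁ = e₂ = ±ε, e₃ arbitrary). -/
import Mathlib

/-- If `|eᵢ| ≤ ε` and `x ∈ [0,1]`, then `|(2x²-x)e₁ + x²e₂ + (x²-x)e₃| ≤ 2ε`,
and the bound is attained. -/
theorem roundoff_example_bound (ε : ℝ) (hε : 0 < ε) :
    (∀ x e₁ e₂ e₃ : ℝ, x ∈ Set.Icc (0 : ℝ) 1 → |e₁| ≤ ε → |e₂| ≤ ε → |e₃| ≤ ε →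
      |(2 * x ^ 2 - x) * e₁ + x ^ 2 * e₂ + (x ^ 2 - x) * e₃| ≤ 2 * ε) ∧
    (∃ x e₁ e₂ e₃ : ℝ, x ∈ Set.Icc (0 : ℝ) 1 ∧ |e₁| ≤ ε ∧ |e₂| ≤ ε ∧ |e₃| ≤ ε ∧
      |(2 * x ^ 2 - x) * e₁ + x ^ 2 * e₂ + (x ^ 2 - x) * e₃| = 2 * ε) := by
  constructor
  · rintro x e₁ e₂ e₃ ⟨hx0, hx1⟩ h1 h2 h3
    have hx2 : x ^ 2 ≤ x := by nlinarith
    have tri : |(2 * x ^ 2 - x) * e₁ + x ^ 2 * e₂ + (x ^ 2 - x) * e₃|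
        ≤ |2 * x ^ 2 - x| * |e₁| + |x ^ 2| * |e₂| + |x ^ 2 - x| * |e₃| := by
      calc |(2 * x ^ 2 - x) * e₁ + x ^ 2 * e₂ + (x ^ 2 - x) * e₃|
          ≤ |(2 * x ^ 2 - x) * e₁ + x ^ 2 * e₂| + |(x ^ 2 - x) * e₃| := abs_add_le _ _
        _ ≤ |(2 * x ^ 2 - x) * e₁| + |x ^ 2 * e₂| + |(x ^ 2 - x) * e₃| := by
            gcongr; exact abs_add_le _ _
        _ = _ := by rw [abs_mul, abs_mul, abs_mul]
    have hsum : |2 * x ^ 2 - x| + |x ^ 2| + |x ^ 2 - x| ≤ 2 := by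
      rw [abs_of_nonneg (by positivity : (0:ℝ) ≤ x ^ 2),
        abs_of_nonpos (by linarith : x ^ 2 - x ≤ 0)]
      rcases le_or_gt x (2 * x ^ 2) with h | h
      · rw [abs_of_nonneg (by linarith)]; nlinarith
      · rw [abs_of_nonpos (by linarith)]; nlinarith
    calc |(2 * x ^ 2 - x) * e₁ + x ^ 2 * e₂ + (x ^ 2 - x) * e₃|
        ≤ |2 * x ^ 2 - x| * |e₁| + |x ^ 2| * |e₂| + |x ^ 2 - x| * |e₃| := tri
      _ ≤ |2 * x ^ 2 - x| * ε + |x ^ 2| * ε + |x ^ 2 - x| * ε := by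
          gcongr <;> positivity
      _ = (|2 * x ^ 2 - x| + |x ^ 2| + |x ^ 2 - x|) * ε := by ring
      _ ≤ 2 * ε := by nlinarith
  · refine ⟨1, ε, ε, 0, ⟨by norm_num, le_refl 1⟩, le_of_eq (abs_of_pos hε),
      le_of_eq (abs_of_pos hε), by simp [hε.le], ?_⟩
    rw [abs_of_nonneg] <;> ring_nf <;> linarith
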